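/- Let a ≥ 2, b ≥ 1 and 1 ≤ i ≤ a−1 be integers and let T be the modified subtractive algorithm on Λ^{a+b}. Then: (1) for Lebesgue-almost every x ∈ Λ^{a+b}, (T^k(x))_j → 0 as k → ∞ for every 1 ≤ j ≤ a+1; (2) for almost every x ∈ A = {x ∈ Λ^{a+b} : σ(x) ≤ b·x_{a+b}}, lim_{k→∞} (T^k(x))_{a+b} > 0; (3) for almost every x ∈ Λ^{a+b} whose orbit T^k(x) does not converge to the origin, there exists an integer k ≥ 1 with T^k(x) ∈ A. -/
import Mathlib


open MeasureTheory Filter Topology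

/-- `Λⁿ`: points of `ℝⁿ` with nonnegative, nondecreasing coordinates. -/
def Lambda (n : ℕ) : Set (Fin n → ℝ) := {x | (∀ i, 0 ≤ x i) ∧ Monotone x}

/-- The modified subtractive algorithm: nondecreasing rearrangement of
`(x₁,…,x_a, x_{a+1}-x_i,…,x_{a+b}-x_i)` (1-based `i`; 0-based index `i-1`). -/
noncomputable def Tmod (a b i : ℕ) (x : Fin (a + b) → ℝ) : Fin (a + b) → ℝ :=
  let s : ℝ := if h : i - 1 < a + b then x ⟨i - 1, h⟩ else 0
  let y : Fin (a + b) → ℝ := fun j => if (j : ℕ) < a then x j else x j - s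
  y ∘ Tuple.sort y

namespace S19

open Finset

variable {n : ℕ}

lemma card_filter_perm (σ : Equiv.Perm (Fin n)) (P : Fin n → Prop) [DecidablePred P] :
    (univ.filter fun p => P (σ p)).card = (univ.filter P).card := by
  apply Finset.card_equiv σ
  intro p
  simp

lemma sorted_le {z : Fin n → ℝ} (hz : Monotone z) (j : Fin n) (c : ℝ)
    (h : (univ.filter fun t => c < z t).card < n - (j : ℕ)) : z j ≤ c := by
  by_contra hc
  push_neg at hc
  have hsub : Finset.Ici j ⊆ univ.filter fun t => c < z t := by
    intro t ht
    simp only [mem_filter, mem_univ, true_and]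
    exact lt_of_lt_of_le hc (hz (Finset.mem_Ici.mp ht))
  have h2 := Finset.card_le_card hsub
  rw [Fin.card_Ici] at h2
  omega

lemma sorted_ge {z : Fin n → ℝ} (hz : Monotone z) (j : Fin n) (c : ℝ)
    (h : (univ.filter fun t => z t < c).card ≤ (j : ℕ)) : c ≤ z j := by
  by_contra hc
  push_neg at hc
  have hsub : Finset.Iic j ⊆ univ.filter fun t => z t < c := by
    intro t ht
    simp only [mem_filter, mem_univ, true_and]
    exact lt_of_le_of_lt (hz (Finset.mem_Iic.mp ht)) hc
  have h2 := Finset.card_le_card hsub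
  rw [Fin.card_Iic] at h2
  omega


noncomputable def Yv (a : ℕ) (d : Fin n) (x : Fin n → ℝ) : Fin n → ℝ :=
  fun j => if (j : ℕ) < a then x j else x j - x d

noncomputable def Tgen (a : ℕ) (d : Fin n) (x : Fin n → ℝ) : Fin n → ℝ :=
  Yv a d x ∘ Tuple.sort (Yv a d x)

lemma tmod_eq (a b i : ℕ) (h : i - 1 < a + b) :
    Tmod a b i = Tgen a (⟨i - 1, h⟩ : Fin (a + b)) := by
  funext x
  simp only [Tmod, dif_pos h]
  rfl

variable {a : ℕ} {d : Fin n} {x : Fin n → ℝ}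

lemma Yv_le (hx : x ∈ Lambda n) (j : Fin n) : Yv a d x j ≤ x j := by
  unfold Yv
  split
  · exact le_rfl
  · exact sub_le_self _ (hx.1 d)

lemma Yv_nonneg (hd : (d : ℕ) < a) (hx : x ∈ Lambda n) (j : Fin n) : 0 ≤ Yv a d x j := by
  unfold Yv
  split
  · exact hx.1 j
  · rename_i hja
    have hdj : d ≤ j := by
      rw [Fin.le_def]; omega
    exact sub_nonneg.mpr (hx.2 hdj)

lemma Tgen_mem (hd : (d : ℕ) < a) (hx : x ∈ Lambda n) : Tgen a d x ∈ Lambda n := by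
  refine ⟨fun j => Yv_nonneg hd hx _, Tuple.monotone_sort _⟩

lemma Tgen_le (hx : x ∈ Lambda n) (j : Fin n) : Tgen a d x j ≤ x j := by
  refine sorted_le (Tuple.monotone_sort _) j (x j) ?_
  simp only [Function.comp_apply]
  rw [card_filter_perm (Tuple.sort (Yv a d x)) (fun q => x j < Yv a d x q)]
  have hsub : (univ.filter fun t => x j < Yv a d x t) ⊆ (Finset.Iic j)ᶜ := by
    intro t ht
    simp only [mem_filter, mem_univ, true_and] at ht
    simp only [Finset.mem_compl, Finset.mem_Iic]
    intro hle
    have : x t ≤ x j := hx.2 hle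
    have := Yv_le hx (d := d) (a := a) t
    linarith
  have h2 := Finset.card_le_card hsub
  rw [Finset.card_compl, Fin.card_Iic, Fintype.card_fin] at h2
  have := j.isLt
  omega

lemma sum_Tgen (hd : (d : ℕ) < a) (han : a < n) :
    ∑ t, Tgen a d x t = ∑ t, x t - ((n - a : ℕ) : ℝ) * x d := by
  have h1 : ∑ t, Tgen a d x t = ∑ t, Yv a d x t := Equiv.sum_comp _ _
  rw [h1]
  have h2 : ∀ t : Fin n, Yv a d x t = x t - (if (t : ℕ) < a then 0 else x d) := by
    intro t; unfold Yv; split <;> ring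
  simp_rw [h2]
  rw [Finset.sum_sub_distrib, Finset.sum_ite, Finset.sum_const_zero, Finset.sum_const, zero_add]
  have h3 : (univ.filter fun t : Fin n => ¬ (t : ℕ) < a) = Finset.Ici (⟨a, han⟩ : Fin n) := by
    ext t
    simp only [mem_filter, mem_univ, true_and, Finset.mem_Ici, Fin.le_def, not_lt]
  rw [h3, Fin.card_Ici]
  simp [nsmul_eq_mul]

lemma Tgen_last (hx : x ∈ Lambda n) (han : a < n) (h0 : 0 < n) :
    x ⟨n - 1, by omega⟩ - x d ≤ Tgen a d x ⟨n - 1, by omega⟩ := by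
  set last : Fin n := ⟨n - 1, by omega⟩
  have h1 : Yv a d x last = x last - x d := by
    unfold Yv
    rw [if_neg]
    simp only [last]
    omega
  have h2 : Yv a d x last ≤ Tgen a d x last := by
    have h3 : Yv a d x last = Tgen a d x ((Tuple.sort (Yv a d x)).symm last) := by
      simp [Tgen]
    rw [h3]
    refine Tuple.monotone_sort _ ?_
    rw [Fin.le_def]
    simp only [last]
    exact Nat.le_of_lt_succ (by have := ((Tuple.sort (Yv a d x)).symm last).isLt; omega)
  linarith [h1 ▸ h2]

lemma freeze_step (hx : x ∈ Lambda n) (hd : (d : ℕ) < a) (j₀ : Fin n) (hj₀a : (j₀ : ℕ) ≤ a)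
    (hdj : (d : ℕ) < (j₀ : ℕ))
    (hgap : x d + x ⟨(j₀ : ℕ) - 1, lt_of_le_of_lt (Nat.sub_le _ _) j₀.isLt⟩ < x j₀) :
    ∀ t : Fin n, (t : ℕ) < (j₀ : ℕ) → Tgen a d x t = x t := by
  intro t ht
  set p : Fin n := ⟨(j₀ : ℕ) - 1, lt_of_le_of_lt (Nat.sub_le _ _) j₀.isLt⟩
  refine le_antisymm (Tgen_le hx t) ?_
  refine sorted_ge (Tuple.monotone_sort _) t (x t) ?_
  simp only [Function.comp_apply]
  rw [card_filter_perm (Tuple.sort (Yv a d x)) (fun q => Yv a d x q < x t)]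
  have hsub : (univ.filter fun q => Yv a d x q < x t) ⊆ Finset.Iio t := by
    intro q hq
    simp only [mem_filter, mem_univ, true_and] at hq
    simp only [Finset.mem_Iio, Fin.lt_def]
    by_contra hqt
    push_neg at hqt
    rcases lt_or_ge (q : ℕ) (j₀ : ℕ) with hcase | hcase
    · -- q < j₀ ≤ a, so Yv q = x q, and x q < x t with t ≤ q contradicts monotone
      have hYq : Yv a d x q = x q := by unfold Yv; rw [if_pos]; omega
      rw [hYq] at hq
      have : x t ≤ x q := hx.2 (by rw [Fin.le_def]; exact_mod_cast hqt)
      linarith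
    · -- q ≥ j₀ : Yv q ≥ x j₀ - x d > x p ≥ x t
      have hY : x q - x d ≤ Yv a d x q := by
        unfold Yv; split
        · linarith [hx.1 d]
        · exact le_rfl
      have h1 : x j₀ ≤ x q := hx.2 (by rw [Fin.le_def]; exact hcase)
      have h2 : x t ≤ x p := hx.2 (by rw [Fin.le_def]; simp only [p]; omega)
      linarith
  have h2 := Finset.card_le_card hsub
  rw [Fin.card_Iio] at h2
  exact h2

section Orbit

variable {n : ℕ} {a : ℕ} {d : Fin n} {x : Fin n → ℝ}

lemma iterate_mem (hd : (d : ℕ) < a) (hx : x ∈ Lambda n) (k : ℕ) :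
    (Tgen a d)^[k] x ∈ Lambda n := by
  induction k with
  | zero => simpa
  | succ k ih => rw [Function.iterate_succ_apply']; exact Tgen_mem hd ih

lemma iterate_antitone (hd : (d : ℕ) < a) (hx : x ∈ Lambda n) (j : Fin n) :
    Antitone fun k => (Tgen a d)^[k] x j := by
  apply antitone_nat_of_succ_le
  intro k
  rw [Function.iterate_succ_apply']
  exact Tgen_le (iterate_mem hd hx k) j

noncomputable def Lim (a : ℕ) (d : Fin n) (x : Fin n → ℝ) (j : Fin n) : ℝ :=
  ⨅ k, (Tgen a d)^[k] x j

lemma bdd_orbit (hd : (d : ℕ) < a) (hx : x ∈ Lambda n) (j : Fin n) :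
    BddBelow (Set.range fun k => (Tgen a d)^[k] x j) := by
  refine ⟨0, ?_⟩
  rintro r ⟨k, rfl⟩
  exact (iterate_mem hd hx k).1 j

lemma Lim_le (hd : (d : ℕ) < a) (hx : x ∈ Lambda n) (k : ℕ) (j : Fin n) :
    Lim a d x j ≤ (Tgen a d)^[k] x j := ciInf_le (bdd_orbit hd hx j) k

lemma tendsto_Lim (hd : (d : ℕ) < a) (hx : x ∈ Lambda n) (j : Fin n) :
    Tendsto (fun k => (Tgen a d)^[k] x j) atTop (𝓝 (Lim a d x j)) :=
  tendsto_atTop_ciInf (iterate_antitone hd hx j) (bdd_orbit hd hx j)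

lemma Lim_nonneg (hd : (d : ℕ) < a) (hx : x ∈ Lambda n) (j : Fin n) :
    0 ≤ Lim a d x j :=
  le_ciInf fun k => (iterate_mem hd hx k).1 j

lemma Lim_mono (hd : (d : ℕ) < a) (hx : x ∈ Lambda n) : Monotone (Lim a d x) := by
  intro j j' hjj
  exact le_ciInf fun k => (Lim_le hd hx k j).trans ((iterate_mem hd hx k).2 hjj)

lemma tendsto_sum_orbit (hd : (d : ℕ) < a) (hx : x ∈ Lambda n) :
    Tendsto (fun k => ∑ t, (Tgen a d)^[k] x t) atTop (𝓝 (∑ t, Lim a d x t)) :=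
  tendsto_finset_sum _ fun t _ => tendsto_Lim hd hx t

lemma Lim_d_eq_zero (hd : (d : ℕ) < a) (han : a < n) (hx : x ∈ Lambda n) :
    Lim a d x d = 0 := by
  set m : ℝ := ((n - a : ℕ) : ℝ) with hm
  have hm1 : (1 : ℝ) ≤ m := by
    rw [hm]
    exact_mod_cast Nat.one_le_iff_ne_zero.mpr (by omega)
  have hs := tendsto_sum_orbit hd hx
  have h1 : Tendsto (fun k => ∑ t, (Tgen a d)^[k + 1] x t) atTop
      (𝓝 (∑ t, Lim a d x t)) := hs.comp (tendsto_add_atTop_nat 1)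
  have h2 : (fun k => ∑ t, (Tgen a d)^[k + 1] x t)
      = fun k => ∑ t, (Tgen a d)^[k] x t - m * (Tgen a d)^[k] x d := by
    funext k
    rw [Function.iterate_succ_apply']
    exact sum_Tgen hd han
  rw [h2] at h1
  have h3 : Tendsto (fun k => ∑ t, (Tgen a d)^[k] x t - m * (Tgen a d)^[k] x d) atTop
      (𝓝 (∑ t, Lim a d x t - m * Lim a d x d)) :=
    hs.sub ((tendsto_Lim hd hx d).const_mul m)
  have h4 := tendsto_nhds_unique h1 h3
  have h5 : m * Lim a d x d = 0 := by linarith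
  have h6 := Lim_nonneg hd hx d
  nlinarith

lemma part1_point (hd : (d : ℕ) < a) (han : a < n) (hx : x ∈ Lambda n)
    (hne : ∀ k, (Tgen a d)^[k] x d ≠ 0) (j : Fin n) (hj : (j : ℕ) ≤ a) :
    Lim a d x j = 0 := by
  by_contra hne0
  set F := Finset.univ.filter fun p : Fin n => Lim a d x p ≠ 0 with hF
  have hjF : j ∈ F := by simp [hF, hne0]
  have hFne : F.Nonempty := ⟨j, hjF⟩
  set j₀ := F.min' hFne with hj₀def
  have hj₀F : j₀ ∈ F := F.min'_mem hFne
  have hLpos : 0 < Lim a d x j₀ := by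
    have h1 : Lim a d x j₀ ≠ 0 := by
      have := hj₀F; rw [hF] at this; simpa using this
    exact lt_of_le_of_ne (Lim_nonneg hd hx j₀) (Ne.symm h1)
  have hmin : ∀ p : Fin n, p < j₀ → Lim a d x p = 0 := by
    intro p hp
    by_contra h
    exact absurd (F.min'_le p (by simp [hF, h])) (not_le.mpr hp)
  have hj₀j : j₀ ≤ j := F.min'_le j hjF
  have hj₀a : (j₀ : ℕ) ≤ a := le_trans hj₀j hj
  have hdj₀ : (d : ℕ) < (j₀ : ℕ) := by
    by_contra h
    push_neg at h
    have h1 : Lim a d x j₀ ≤ Lim a d x d :=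
      Lim_mono hd hx (show j₀ ≤ d from by rw [Fin.le_def]; exact h)
    rw [Lim_d_eq_zero hd han hx] at h1
    linarith
  set p : Fin n := ⟨(j₀ : ℕ) - 1, lt_of_le_of_lt (Nat.sub_le _ _) j₀.isLt⟩ with hpdef
  have hpj₀ : p < j₀ := by rw [Fin.lt_def]; simp only [hpdef]; omega
  have hLp : Lim a d x p = 0 := hmin p hpj₀
  set ε := Lim a d x j₀ with hε
  have hev : ∀ᶠ k in atTop, (Tgen a d)^[k] x p < ε / 2 := by
    have := tendsto_Lim hd hx p
    rw [hLp] at this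
    exact this.eventually (gt_mem_nhds (by linarith))
  obtain ⟨K, hK⟩ := eventually_atTop.mp hev
  have hfreeze : ∀ k, K ≤ k → ∀ t : Fin n, (t : ℕ) < (j₀ : ℕ) →
      (Tgen a d)^[k + 1] x t = (Tgen a d)^[k] x t := by
    intro k hk t ht
    rw [Function.iterate_succ_apply']
    refine freeze_step (iterate_mem hd hx k) hd j₀ hj₀a hdj₀ ?_ t ht
    have h1 : (Tgen a d)^[k] x d ≤ (Tgen a d)^[k] x p :=
      (iterate_mem hd hx k).2 (show d ≤ p from by rw [Fin.le_def]; simp only [hpdef]; omega)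
    have h2 : (Tgen a d)^[k] x p < ε / 2 := hK k hk
    have h3 : ε ≤ (Tgen a d)^[k] x j₀ := Lim_le hd hx k j₀
    have h4 : (Tgen a d)^[k] x ⟨(j₀ : ℕ) - 1, lt_of_le_of_lt (Nat.sub_le _ _) j₀.isLt⟩
        = (Tgen a d)^[k] x p := rfl
    rw [h4]
    linarith
  have hconst : ∀ r, ∀ t : Fin n, (t : ℕ) < (j₀ : ℕ) →
      (Tgen a d)^[K + r] x t = (Tgen a d)^[K] x t := by
    intro r
    induction r with
    | zero => intro t _; rfl
    | succ r ih =>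
      intro t ht
      have h1 := hfreeze (K + r) (Nat.le_add_right _ _) t ht
      rw [show K + (r + 1) = (K + r) + 1 from rfl, h1]
      exact ih t ht
  set c := (Tgen a d)^[K] x d with hcdef
  have hc0 : 0 < c :=
    lt_of_le_of_ne ((iterate_mem hd hx K).1 d) (Ne.symm (hne K))
  set m : ℝ := ((n - a : ℕ) : ℝ) with hm
  have hm1 : (1 : ℝ) ≤ m := by
    rw [hm]; exact_mod_cast Nat.one_le_iff_ne_zero.mpr (by omega)
  have hSrec : ∀ r, ∑ t, (Tgen a d)^[K + r + 1] x t
      = ∑ t, (Tgen a d)^[K + r] x t - m * c := by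
    intro r
    rw [Function.iterate_succ_apply', sum_Tgen hd han, hconst r d hdj₀]
  have hSr : ∀ r : ℕ, ∑ t, (Tgen a d)^[K + r] x t
      = ∑ t, (Tgen a d)^[K] x t - (r : ℝ) * (m * c) := by
    intro r
    induction r with
    | zero => simp
    | succ r ih =>
      rw [show K + (r + 1) = K + r + 1 from rfl, hSrec r, ih]
      push_cast
      ring
  obtain ⟨r, hr⟩ := exists_nat_gt ((∑ t, (Tgen a d)^[K] x t) / (m * c))
  have hmc : 0 < m * c := by positivity
  have h1 : (∑ t, (Tgen a d)^[K] x t) < (r : ℝ) * (m * c) := by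
    rwa [div_lt_iff₀ hmc] at hr
  have h2 : 0 ≤ ∑ t, (Tgen a d)^[K + r] x t :=
    Finset.sum_nonneg fun t _ => (iterate_mem hd hx (K + r)).1 t
  rw [hSr r] at h2
  linarith

end Orbit

section Parts

variable {n : ℕ} {a : ℕ} {d : Fin n} {x : Fin n → ℝ}

lemma part2_point (hd : (d : ℕ) < a) (han : a < n) (hx : x ∈ Lambda n)
    (hstrict : ∑ t, x t < ((n - a : ℕ) : ℝ) * x ⟨n - 1, by omega⟩) :
    ∃ L : ℝ, 0 < L ∧
      Tendsto (fun k => (Tgen a d)^[k] x ⟨n - 1, by omega⟩) atTop (𝓝 L) := by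
  have h0 : 0 < n := by omega
  set last : Fin n := ⟨n - 1, by omega⟩ with hlast
  set m : ℝ := ((n - a : ℕ) : ℝ) with hm
  have hm1 : (1 : ℝ) ≤ m := by
    rw [hm]; exact_mod_cast Nat.one_le_iff_ne_zero.mpr (by omega)
  have hstep : ∀ k, m * (Tgen a d)^[k] x last - ∑ t, (Tgen a d)^[k] x t ≤
      m * (Tgen a d)^[k + 1] x last - ∑ t, (Tgen a d)^[k + 1] x t := by
    intro k
    have h1 : (Tgen a d)^[k] x last - (Tgen a d)^[k] x d ≤ (Tgen a d)^[k + 1] x last := by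
      rw [Function.iterate_succ_apply']
      exact Tgen_last (iterate_mem hd hx k) han h0
    have h2 : ∑ t, (Tgen a d)^[k + 1] x t
        = ∑ t, (Tgen a d)^[k] x t - m * (Tgen a d)^[k] x d := by
      rw [Function.iterate_succ_apply']
      exact sum_Tgen hd han
    have h3 := mul_le_mul_of_nonneg_left h1 (le_trans zero_le_one hm1)
    rw [mul_sub] at h3
    rw [h2]
    linarith
  have hD0 : ∀ k, m * x last - ∑ t, x t ≤
      m * (Tgen a d)^[k] x last - ∑ t, (Tgen a d)^[k] x t := by
    intro k
    induction k with
    | zero => simp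
    | succ k ih => exact le_trans ih (hstep k)
  set D0 : ℝ := m * x last - ∑ t, x t with hD0def
  have hD0pos : 0 < D0 := by rw [hD0def]; rw [hlast]; linarith
  refine ⟨Lim a d x last, ?_, tendsto_Lim hd hx last⟩
  have hlb : ∀ k, D0 / m ≤ (Tgen a d)^[k] x last := by
    intro k
    have h1 := hD0 k
    have h2 : 0 ≤ ∑ t, (Tgen a d)^[k] x t :=
      Finset.sum_nonneg fun t _ => (iterate_mem hd hx k).1 t
    rw [div_le_iff₀ (by linarith)]
    linarith [mul_comm ((Tgen a d)^[k] x last) m]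
  have := ge_of_tendsto' (tendsto_Lim hd hx last) hlb
  have : 0 < D0 / m := by positivity
  linarith [ge_of_tendsto' (tendsto_Lim hd hx last) hlb]

lemma part3_point (hd : (d : ℕ) < a) (han : a < n) (hx : x ∈ Lambda n)
    (hne : ∀ k, (Tgen a d)^[k] x d ≠ 0)
    (hnot : ¬ Tendsto (fun k => (Tgen a d)^[k] x) atTop (𝓝 0)) :
    ∃ k : ℕ, 1 ≤ k ∧
      ∑ t, (Tgen a d)^[k] x t ≤ ((n - a : ℕ) : ℝ) * (Tgen a d)^[k] x ⟨n - 1, by omega⟩ := by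
  have h0 : 0 < n := by omega
  set last : Fin n := ⟨n - 1, by omega⟩ with hlast
  set m : ℝ := ((n - a : ℕ) : ℝ) with hm
  have hle_last : ∀ j : Fin n, j ≤ last := by
    intro j
    rw [Fin.le_def]
    have := j.isLt
    simp only [hlast]
    omega
  have hL0 : ∀ j : Fin n, (j : ℕ) ≤ a → Lim a d x j = 0 := part1_point hd han hx hne
  have hLlast : 0 < Lim a d x last := by
    rcases (Lim_nonneg hd hx last).lt_or_eq with h | h
    · exact h
    · exfalso
      apply hnot
      rw [tendsto_pi_nhds]
      intro j
      have hj0 : Lim a d x j = 0 :=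
        le_antisymm (le_trans (Lim_mono hd hx (hle_last j)) h.symm.le) (Lim_nonneg hd hx j)
      have := tendsto_Lim hd hx j
      rw [hj0] at this
      simpa using this
  set F := Finset.univ.filter fun t : Fin n => a < (t : ℕ) with hF
  have hsum_eq : ∑ t, Lim a d x t = ∑ t ∈ F, Lim a d x t := by
    refine (Finset.sum_subset F.subset_univ ?_).symm
    intro t _ ht
    rw [hF] at ht
    simp only [Finset.mem_filter, Finset.mem_univ, true_and, not_lt] at ht
    exact hL0 t ht
  have hcard : F.card = n - (a + 1) := by
    have h3 : F = (Finset.Iic (⟨a, han⟩ : Fin n))ᶜ := by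
      ext t
      simp only [hF, Finset.mem_filter, Finset.mem_univ, true_and, Finset.mem_compl,
        Finset.mem_Iic, Fin.le_def, not_le]
    rw [h3, Finset.card_compl, Fin.card_Iic, Fintype.card_fin]
  have hbound : ∑ t ∈ F, Lim a d x t ≤ ((n - (a + 1) : ℕ) : ℝ) * Lim a d x last := by
    calc ∑ t ∈ F, Lim a d x t ≤ ∑ _t ∈ F, Lim a d x last :=
          Finset.sum_le_sum fun t _ => Lim_mono hd hx (hle_last t)
      _ = (F.card : ℝ) * Lim a d x last := by rw [Finset.sum_const, nsmul_eq_mul]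
      _ = _ := by rw [hcard]
  have hσ : ∑ t, Lim a d x t ≤ ((n - (a + 1) : ℕ) : ℝ) * Lim a d x last := by
    rw [hsum_eq]; exact hbound
  have hcast : m = ((n - (a + 1) : ℕ) : ℝ) + 1 := by
    rw [hm]
    have : (n - (a + 1)) + 1 = n - a := by omega
    rw [← this]
    push_cast
    ring
  have hpos : 0 < m * Lim a d x last - ∑ t, Lim a d x t := by
    rw [hcast]
    nlinarith
  have hD : Tendsto (fun k => m * (Tgen a d)^[k] x last - ∑ t, (Tgen a d)^[k] x t) atTop
      (𝓝 (m * Lim a d x last - ∑ t, Lim a d x t)) :=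
    ((tendsto_Lim hd hx last).const_mul m).sub (tendsto_sum_orbit hd hx)
  have hev : ∀ᶠ k in atTop,
      0 < m * (Tgen a d)^[k] x last - ∑ t, (Tgen a d)^[k] x t :=
    hD.eventually (eventually_gt_nhds hpos)
  obtain ⟨N, hN⟩ := eventually_atTop.mp hev
  refine ⟨N + 1, by omega, ?_⟩
  have := hN (N + 1) (by omega)
  linarith

end Parts

section MeasureLemmas

variable {n : ℕ} {a : ℕ}

noncomputable def subEquiv (a : ℕ) (d : Fin n) (hd : (d : ℕ) < a) :
    (Fin n → ℝ) ≃ₗ[ℝ] (Fin n → ℝ) where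
  toFun := Yv a d
  invFun z := fun j => if (j : ℕ) < a then z j else z j + z d
  left_inv x := by
    funext j
    show (if (j : ℕ) < a then Yv a d x j else Yv a d x j + Yv a d x d) = x j
    have hYd : Yv a d x d = x d := by unfold Yv; rw [if_pos hd]
    by_cases h : (j : ℕ) < a
    · rw [if_pos h]; unfold Yv; rw [if_pos h]
    · rw [if_neg h, hYd]; unfold Yv; rw [if_neg h]; ring
  right_inv z := by
    funext j
    show Yv a d (fun j => if (j : ℕ) < a then z j else z j + z d) j = z j
    unfold Yv
    by_cases h : (j : ℕ) < a
    · simp [h]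
    · simp only [if_neg h, if_pos hd]
      ring
  map_add' x y := by
    funext j
    show Yv a d (x + y) j = Yv a d x j + Yv a d y j
    unfold Yv
    by_cases h : (j : ℕ) < a <;> simp [h] <;> ring
  map_smul' c x := by
    funext j
    show Yv a d (c • x) j = c • Yv a d x j
    unfold Yv
    by_cases h : (j : ℕ) < a <;> simp [h, smul_eq_mul] <;> ring

noncomputable def permEquiv (π : Equiv.Perm (Fin n)) : (Fin n → ℝ) ≃ₗ[ℝ] (Fin n → ℝ) where
  toFun x := x ∘ π
  invFun x := x ∘ π.symm
  left_inv x := by funext j; simp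
  right_inv x := by funext j; simp
  map_add' x y := rfl
  map_smul' c x := rfl

lemma null_preimage (d : Fin n) (hd : (d : ℕ) < a) {S : Set (Fin n → ℝ)}
    (hS : volume S = 0) : volume (Tgen a d ⁻¹' S) = 0 := by
  obtain ⟨S', hsub, hmeas, hS'⟩ := exists_measurable_superset_of_null hS
  have hmain : Tgen a d ⁻¹' S' ⊆
      ⋃ π : Equiv.Perm (Fin n),
        ((((subEquiv a d hd).trans (permEquiv π)) :
          (Fin n → ℝ) →ₗ[ℝ] (Fin n → ℝ)) : (Fin n → ℝ) → (Fin n → ℝ)) ⁻¹' S' := by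
    intro x hx
    rw [Set.mem_preimage] at hx
    refine Set.mem_iUnion.mpr ⟨Tuple.sort (Yv a d x), ?_⟩
    exact hx
  refine measure_mono_null (Set.Subset.trans (Set.preimage_mono hsub) hmain)
    (measure_iUnion_null fun π => ?_)
  have hdet : LinearMap.det
      (((subEquiv a d hd).trans (permEquiv π)) : (Fin n → ℝ) →ₗ[ℝ] (Fin n → ℝ)) ≠ 0 :=
    IsUnit.ne_zero (LinearEquiv.isUnit_det' _)
  rw [Measure.addHaar_preimage_linearMap volume hdet, hS', mul_zero]

lemma null_coord (d : Fin n) : volume {x : Fin n → ℝ | x d = 0} = 0 := by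
  set pr : (Fin n → ℝ) →ₗ[ℝ] ℝ := LinearMap.proj d with hpr
  have h1 : {x : Fin n → ℝ | x d = 0} = (LinearMap.ker pr : Set _) := by
    ext x; simp [LinearMap.mem_ker, hpr]
  rw [h1]
  refine Measure.addHaar_submodule _ _ ?_
  intro h
  have h2 : (Pi.single d 1 : Fin n → ℝ) ∈ LinearMap.ker pr := by
    rw [h]; trivial
  rw [LinearMap.mem_ker] at h2
  simp [hpr] at h2

lemma null_hyper (c : ℝ) (h0 : 2 ≤ n) :
    volume {x : Fin n → ℝ | ∑ t, x t = c * x ⟨n - 1, by omega⟩} = 0 := by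
  set last : Fin n := ⟨n - 1, by omega⟩ with hlast
  set φ : (Fin n → ℝ) →ₗ[ℝ] ℝ :=
    { toFun := fun x => ∑ t, x t - c * x last
      map_add' := by
        intro x y
        simp only [Pi.add_apply, Finset.sum_add_distrib]
        ring
      map_smul' := by
        intro r x
        simp only [Pi.smul_apply, smul_eq_mul, RingHom.id_apply, ← Finset.mul_sum]
        ring } with hφ
  have h1 : {x : Fin n → ℝ | ∑ t, x t = c * x last} = (LinearMap.ker φ : Set _) := by
    ext x
    simp only [Set.mem_setOf_eq, SetLike.mem_coe, LinearMap.mem_ker, hφ, LinearMap.coe_mk,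
      AddHom.coe_mk, sub_eq_zero]
  rw [h1]
  refine Measure.addHaar_submodule _ _ ?_
  intro h
  set z : Fin n := ⟨0, by omega⟩ with hz
  have hzl : last ≠ z := by
    simp only [hlast, hz, ne_eq, Fin.mk.injEq]
    omega
  have h2 : (Pi.single z 1 : Fin n → ℝ) ∈ LinearMap.ker φ := by rw [h]; trivial
  rw [LinearMap.mem_ker] at h2
  have h3 : φ (Pi.single z 1) = 1 := by
    simp only [hφ, LinearMap.coe_mk, AddHom.coe_mk]
    rw [Pi.single_eq_of_ne hzl]
    rw [Finset.sum_eq_single z]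
    · simp
    · intro t _ ht; exact Pi.single_eq_of_ne ht 1
    · intro ht; exact absurd (Finset.mem_univ z) ht
  rw [h3] at h2
  exact one_ne_zero h2

end MeasureLemmas

end S19

/-- for the modified subtractive algorithm `T`:
(1) for a.e. `x ∈ Λ^{a+b}` the first `a+1` coordinates of the iterates tend to
`0`; (2) for a.e. `x ∈ A` the last coordinate of the iterates has a strictly
positive limit; (3) for a.e. `x ∈ Λ^{a+b}` whose orbit does not converge to the
origin, some iterate with `k ≥ 1` lies in `A`. -/
theorem statement19 (a b i : ℕ) (ha : 2 ≤ a) (hb : 1 ≤ b)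
    (hi1 : 1 ≤ i) (hi2 : i ≤ a - 1) :
    (∀ᵐ x : Fin (a + b) → ℝ, x ∈ Lambda (a + b) →
      ∀ j : Fin (a + b), (j : ℕ) < a + 1 →
        Tendsto (fun k => (Tmod a b i)^[k] x j) atTop (𝓝 0)) ∧
    (∀ᵐ x : Fin (a + b) → ℝ,
      (x ∈ Lambda (a + b) ∧ ∑ t, x t ≤ (b : ℝ) * x ⟨a + b - 1, by omega⟩) →
      ∃ L : ℝ, 0 < L ∧
        Tendsto (fun k => (Tmod a b i)^[k] x ⟨a + b - 1, by omega⟩) atTop (𝓝 L)) ∧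
    (∀ᵐ x : Fin (a + b) → ℝ, x ∈ Lambda (a + b) →
      ¬ Tendsto (fun k => (Tmod a b i)^[k] x) atTop (𝓝 0) →
      ∃ k : ℕ, 1 ≤ k ∧ (Tmod a b i)^[k] x ∈ Lambda (a + b) ∧
        ∑ t, (Tmod a b i)^[k] x t ≤
          (b : ℝ) * (Tmod a b i)^[k] x ⟨a + b - 1, by omega⟩) := by
  have hida : i - 1 < a + b := by omega
  set d : Fin (a + b) := ⟨i - 1, hida⟩ with hddef
  have hT : Tmod a b i = S19.Tgen a d := S19.tmod_eq a b i hida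
  have hd : (d : ℕ) < a := by
    simp only [hddef]
    omega
  have han : a < a + b := by omega
  have hcast : ((a + b - a : ℕ) : ℝ) = (b : ℝ) := by
    have h : a + b - a = b := by omega
    rw [h]
  have hbad : ∀ k : ℕ,
      volume ((S19.Tgen a d)^[k] ⁻¹' {y : Fin (a + b) → ℝ | y d = 0}) = 0 := by
    intro k
    induction k with
    | zero => simpa using S19.null_coord d
    | succ k ih =>
      have heq : (S19.Tgen a d)^[k + 1] ⁻¹' {y : Fin (a + b) → ℝ | y d = 0}
          = S19.Tgen a d ⁻¹' ((S19.Tgen a d)^[k] ⁻¹' {y : Fin (a + b) → ℝ | y d = 0}) := by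
        ext z
        simp [Function.iterate_succ_apply]
      rw [heq]
      exact S19.null_preimage d hd ih
  have h1ae : ∀ᵐ x : Fin (a + b) → ℝ, ∀ k, (S19.Tgen a d)^[k] x d ≠ 0 := by
    rw [ae_iff]
    refine measure_mono_null ?_ (measure_iUnion_null hbad)
    intro x hx
    simp only [Set.mem_setOf_eq, not_forall, not_not] at hx
    obtain ⟨k, hk⟩ := hx
    exact Set.mem_iUnion.mpr ⟨k, hk⟩
  have h2ae : ∀ᵐ x : Fin (a + b) → ℝ,
      ¬ (∑ t, x t = (b : ℝ) * x ⟨a + b - 1, by omega⟩) := by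
    rw [ae_iff]
    refine measure_mono_null ?_ (S19.null_hyper (b : ℝ) (by omega))
    intro x hx
    simp only [Set.mem_setOf_eq, not_not] at hx
    exact hx
  refine ⟨?_, ?_, ?_⟩
  · filter_upwards [h1ae] with x hne hx j hj
    rw [hT]
    have hz := S19.part1_point hd han hx hne j (by omega)
    have ht := S19.tendsto_Lim hd hx j
    rwa [hz] at ht
  · filter_upwards [h2ae] with x hno hyp
    obtain ⟨hx, hle⟩ := hyp
    rw [hT]
    have hstrict : ∑ t, x t < ((a + b - a : ℕ) : ℝ) * x ⟨a + b - 1, by omega⟩ := by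
      rw [hcast]
      exact lt_of_le_of_ne hle hno
    exact S19.part2_point hd han hx hstrict
  · filter_upwards [h1ae] with x hne hx hnot
    rw [hT] at hnot ⊢
    obtain ⟨k, hk1, hk2⟩ := S19.part3_point hd han hx hne hnot
    refine ⟨k, hk1, S19.iterate_mem hd hx k, ?_⟩
    rwa [hcast] at hk2
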